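/- Assume ĥ_k ≠ 0. Let P be a power vector with strictly positive entries and let λ > 1. Then SINR_k(λP) > SINR_k(P), where λP denotes the power vector with entries λP_1, …, λP_K. (Directional monotonicity condition of a competitive utility function.) -/

import Mathlib

open Matrix Finset
open scoped ComplexOrder

noncomputable section

/-- Estimation-error-plus-noise covariance `D(P) = Σⱼ Pⱼ Eⱼ + C_z`. -/
def Dmat {K n : ℕ} (E : Fin K → Matrix (Fin n) (Fin n) ℂ)
    (Cz : Matrix (Fin n) (Fin n) ℂ) (P : Fin K → ℝ) : Matrix (Fin n) (Fin n) ℂ :=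
  (∑ j, (P j : ℂ) • E j) + Cz

/-- Interference-plus-noise covariance of user `k`:
`Ω_k(P) = Σ_{k'≠k} P_{k'} hhat_{k'} hhat_{k'}ᴴ + D(P)`. -/
def Omat {K n : ℕ} (hhat : Fin K → Fin n → ℂ) (E : Fin K → Matrix (Fin n) (Fin n) ℂ)
    (Cz : Matrix (Fin n) (Fin n) ℂ) (k : Fin K) (P : Fin K → ℝ) :
    Matrix (Fin n) (Fin n) ℂ :=
  (∑ k' ∈ Finset.univ.erase k, (P k' : ℂ) • vecMulVec (hhat k') (star (hhat k'))) +
    Dmat E Cz P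

/-- Uplink SINR of user `k`: `SINR_k(P) = P_k · hhat_kᴴ Ω_k(P)⁻¹ hhat_k`. -/
def SINR {K n : ℕ} (hhat : Fin K → Fin n → ℂ) (E : Fin K → Matrix (Fin n) (Fin n) ℂ)
    (Cz : Matrix (Fin n) (Fin n) ℂ) (k : Fin K) (P : Fin K → ℝ) : ℝ :=
  P k * (star (hhat k) ⬝ᵥ (Omat hhat E Cz k P)⁻¹ *ᵥ hhat k).re

lemma smul_posSemidef' {n : ℕ} {c : ℝ} (hc : 0 ≤ c) {M : Matrix (Fin n) (Fin n) ℂ}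
    (hM : M.PosSemidef) : ((c : ℂ) • M).PosSemidef := by
  rw [posSemidef_iff_dotProduct_mulVec]
  constructor
  · unfold Matrix.IsHermitian
    rw [conjTranspose_smul, hM.1]
    congr 1
    simp [Complex.star_def, Complex.conj_ofReal]
  · intro x
    rw [smul_mulVec, dotProduct_smul, smul_eq_mul]
    exact mul_nonneg (Complex.zero_le_real.2 hc) (hM.dotProduct_mulVec_nonneg x)

lemma smul_posDef' {n : ℕ} {c : ℝ} (hc : 0 < c) {M : Matrix (Fin n) (Fin n) ℂ}
    (hM : M.PosDef) : ((c : ℂ) • M).PosDef := by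
  rw [posDef_iff_dotProduct_mulVec]
  constructor
  · unfold Matrix.IsHermitian
    rw [conjTranspose_smul, hM.1]
    congr 1
    simp [Complex.star_def, Complex.conj_ofReal]
  · intro x hx
    rw [smul_mulVec, dotProduct_smul, smul_eq_mul]
    exact mul_pos (Complex.zero_lt_real.2 hc) (hM.dotProduct_mulVec_pos hx)

lemma vecMulVec_posSemidef' {n : ℕ} (v : Fin n → ℂ) :
    (vecMulVec v (star v)).PosSemidef := by
  rw [posSemidef_iff_dotProduct_mulVec]
  constructor
  · ext i j
    simp [conjTranspose_apply, vecMulVec_apply, mul_comm]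
  · intro x
    have key : star x ⬝ᵥ (vecMulVec v (star v)) *ᵥ x
        = star (star v ⬝ᵥ x) * (star v ⬝ᵥ x) := by
      simp only [dotProduct, mulVec, vecMulVec_apply, Pi.star_apply, star_sum, star_mul',
        star_star]
      rw [Finset.sum_mul_sum]
      simp only [Finset.mul_sum]
      refine Finset.sum_congr rfl fun i _ => Finset.sum_congr rfl fun j _ => by ring
    rw [key]
    exact star_mul_self_nonneg _

lemma Omat_posDef {K n : ℕ} (hhat : Fin K → Fin n → ℂ)
    (E : Fin K → Matrix (Fin n) (Fin n) ℂ) (hE : ∀ j, (E j).PosSemidef)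
    (Cz : Matrix (Fin n) (Fin n) ℂ) (hCz : Cz.PosDef)
    (k : Fin K) (Q : Fin K → ℝ) (hQ : ∀ j, 0 ≤ Q j) :
    (Omat hhat E Cz k Q).PosDef := by
  unfold Omat Dmat
  rw [← add_assoc]
  refine Matrix.PosDef.posSemidef_add (Matrix.PosSemidef.add ?_ ?_) hCz
  · exact Finset.sum_induction _ _ (fun a b ha hb => ha.add hb) Matrix.PosSemidef.zero
      (fun j _ => smul_posSemidef' (hQ j) (vecMulVec_posSemidef' _))
  · exact Finset.sum_induction _ _ (fun a b ha hb => ha.add hb) Matrix.PosSemidef.zero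
      (fun j _ => smul_posSemidef' (hQ j) (hE j))

lemma inv_quad_lt {n : ℕ} {X Y : Matrix (Fin n) (Fin n) ℂ} (hX : X.PosDef) (hY : Y.PosDef)
    (hD : (Y - X).PosDef) {v : Fin n → ℂ} (hv : v ≠ 0) :
    star v ⬝ᵥ Y⁻¹ *ᵥ v < star v ⬝ᵥ X⁻¹ *ᵥ v := by
  set D := Y - X with hDdef
  have hXd : IsUnit X.det := hX.det_pos.ne'.isUnit
  have hYd : IsUnit Y.det := hY.det_pos.ne'.isUnit
  have hXi : X * X⁻¹ = 1 := mul_nonsing_inv _ hXd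
  have hXi' : X⁻¹ * X = 1 := nonsing_inv_mul _ hXd
  have hYi : Y * Y⁻¹ = 1 := mul_nonsing_inv _ hYd
  have hYi' : Y⁻¹ * Y = 1 := nonsing_inv_mul _ hYd
  have e1 : Y * (X⁻¹ - Y⁻¹) * Y = D * X⁻¹ * D + D := by
    rw [hDdef]
    simp only [Matrix.sub_mul, Matrix.mul_sub, hXi, hXi', hYi, hYi', Matrix.mul_assoc,
      Matrix.one_mul, Matrix.mul_one]
    simp only [← Matrix.mul_assoc, hXi, hXi', hYi, hYi', Matrix.one_mul, Matrix.mul_one]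
    abel
  have e2 : X⁻¹ - Y⁻¹ = Y⁻¹ * (D * X⁻¹ * D) * Y⁻¹ + Y⁻¹ * D * Y⁻¹ := by
    have h0 : X⁻¹ - Y⁻¹ = Y⁻¹ * (Y * (X⁻¹ - Y⁻¹) * Y) * Y⁻¹ := by
      rw [Matrix.mul_assoc, Matrix.mul_assoc, Matrix.mul_assoc, hYi, Matrix.mul_one,
        ← Matrix.mul_assoc, hYi', Matrix.one_mul]
    rw [h0, e1]
    simp only [Matrix.mul_add, Matrix.add_mul, Matrix.mul_assoc]
  have hYinvH : (Y⁻¹).IsHermitian := hY.inv.isHermitian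
  have hDH : D.IsHermitian := hD.isHermitian
  set w := Y⁻¹ *ᵥ v with hw
  have hwne : w ≠ 0 := by
    intro h0
    apply hv
    have h1 : Y *ᵥ w = Y *ᵥ 0 := by rw [h0]
    rwa [hw, mulVec_mulVec, hYi, one_mulVec, mulVec_zero] at h1
  have t2 : star v ⬝ᵥ (Y⁻¹ * D * Y⁻¹) *ᵥ v = star w ⬝ᵥ D *ᵥ w := by
    rw [hw, ← mulVec_mulVec, ← mulVec_mulVec, star_mulVec, hYinvH.eq,
      ← Matrix.dotProduct_mulVec, mulVec_mulVec]
  have t2pos : 0 < star v ⬝ᵥ (Y⁻¹ * D * Y⁻¹) *ᵥ v := by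
    rw [t2]; exact hD.dotProduct_mulVec_pos hwne
  have t1 : Y⁻¹ * (D * X⁻¹ * D) * Y⁻¹ = (D * Y⁻¹)ᴴ * X⁻¹ * (D * Y⁻¹) := by
    rw [conjTranspose_mul, hYinvH.eq, hDH.eq]
    simp only [Matrix.mul_assoc]
  have t1nn : 0 ≤ star v ⬝ᵥ (Y⁻¹ * (D * X⁻¹ * D) * Y⁻¹) *ᵥ v := by
    rw [t1]
    exact (hX.inv.posSemidef.conjTranspose_mul_mul_same (D * Y⁻¹)).dotProduct_mulVec_nonneg v
  have hlt : 0 < star v ⬝ᵥ (X⁻¹ - Y⁻¹) *ᵥ v := by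
    rw [e2, Matrix.add_mulVec, dotProduct_add]
    exact add_pos_of_nonneg_of_pos t1nn t2pos
  rw [Matrix.sub_mulVec, dotProduct_sub, sub_pos] at hlt
  exact hlt

/-- **Directional monotonicity condition of a competitive utility function.**
If `ĥ_k ≠ 0`, `P` is a strictly positive power vector and `λ > 1`, then
`SINR_k(λP) > SINR_k(P)`. -/
theorem SINR_directional_monotone {K n : ℕ}
    (hhat : Fin K → Fin n → ℂ)
    (E : Fin K → Matrix (Fin n) (Fin n) ℂ) (hE : ∀ j, (E j).PosSemidef)
    (Cz : Matrix (Fin n) (Fin n) ℂ) (hCz : Cz.PosDef)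
    (k : Fin K) (hk : hhat k ≠ 0)
    (P : Fin K → ℝ) (hP : ∀ j, 0 < P j)
    (lam : ℝ) (hlam : 1 < lam) :
    SINR hhat E Cz k P < SINR hhat E Cz k (fun j => lam * P j) := by
  have hlam0 : (0:ℝ) < lam := lt_trans one_pos hlam
  have hlamC : (lam : ℂ) ≠ 0 := by exact_mod_cast hlam0.ne'
  set A := Omat hhat E Cz k P with hAdef
  set X := Omat hhat E Cz k (fun j => lam * P j) with hXdef
  have hA : A.PosDef := Omat_posDef hhat E hE Cz hCz k P (fun j => (hP j).le)
  have hX : X.PosDef :=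
    Omat_posDef hhat E hE Cz hCz k _ (fun j => (mul_pos hlam0 (hP j)).le)
  set Y : Matrix (Fin n) (Fin n) ℂ := (lam : ℂ) • A with hYdef
  have hY : Y.PosDef := smul_posDef' hlam0 hA
  -- the key matrix identity  X = Y - (lam - 1) • Cz
  have hid : X = Y - ((lam - 1 : ℝ) : ℂ) • Cz := by
    rw [hXdef, hYdef, hAdef]
    unfold Omat Dmat
    ext i j
    simp only [Matrix.sub_apply, Matrix.add_apply, Matrix.smul_apply, Matrix.sum_apply,
      smul_eq_mul, Complex.ofReal_mul, Finset.mul_sum, mul_add, mul_assoc]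
    push_cast
    ring
  have hD : (Y - X).PosDef := by
    rw [hid, sub_sub_cancel]
    exact smul_posDef' (by linarith) hCz
  -- Y⁻¹ = lam⁻¹ • A⁻¹
  have hYinv : Y⁻¹ = (lam : ℂ)⁻¹ • A⁻¹ := by
    apply Matrix.inv_eq_left_inv
    rw [hYdef, Matrix.smul_mul, Matrix.mul_smul, smul_smul, inv_mul_cancel₀ hlamC, one_smul,
      nonsing_inv_mul _ hA.det_pos.ne'.isUnit]
  have key := inv_quad_lt hX hY hD hk
  rw [hYinv, smul_mulVec, dotProduct_smul, smul_eq_mul] at key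
  have keyre := (Complex.lt_def.mp key).1
  rw [← Complex.ofReal_inv, Complex.re_ofReal_mul] at keyre
  show P k * (star (hhat k) ⬝ᵥ A⁻¹ *ᵥ hhat k).re
      < (lam * P k) * (star (hhat k) ⬝ᵥ X⁻¹ *ᵥ hhat k).re
  have heq : P k * (star (hhat k) ⬝ᵥ A⁻¹ *ᵥ hhat k).re
      = (lam * P k) * (lam⁻¹ * (star (hhat k) ⬝ᵥ A⁻¹ *ᵥ hhat k).re) := by
    field_simp
  rw [heq]
  exact mul_lt_mul_of_pos_left keyre (mul_pos hlam0 (hP k))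

end
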